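/- Suppose δ₃ := γ₀·h₂ + 2φ₀·(g₁·k₁ − h₃) ≠ 0 and set f := (h₁ + γ₀·(g₁² − h₂) + φ₀·(h₃ + 2g₁³ − 3g₁k₁))/δ₃. Then for every w > 0 one has δ₁(w)/δ₂(w) = −w·f, and consequently for any ξ > 0, any invertible M×M real matrix Σ and any vector β ∈ ℝ^M, the robust equilibrium amount u* := −(1/(ξ+1))·(δ₁(w)/δ₂(w))·Σ⁻¹β equals (w/(ξ+1))·f·Σ⁻¹β, i.e. it is proportional to the current wealth w. (Derivation of the equilibrium strategy (29)/(36) and Remark 4(ii).) -/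

import Mathlib

/-! Under the ansatz every term of `δ₁` is homogeneous of degree `0` in `w` and every term of `δ₂`
of degree `-1`: `γ` and `φ` scale like `w⁻¹` and `w⁻²`, while `h`, `g`, `k` have degrees `1`, `1`, `2`.
Explicitly `δ₁` is the numerator of `f`, a constant, and `δ₂ = -δ₃ / w`, so `δ₁ / δ₂ = -w f`. -/

/-- `δ₁(w)` of equation (24) under the ansatz (27)-(28):
`(∂h/∂w)(w,y)|_{y=w} + (γ(w)g(w) + 2φ(w)g(w)²)g'(w) − φ(w)k(w)g'(w) − φ(w)g(w)k'(w)`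
with `γ(w) = γ₀/w`, `φ(w) = φ₀/w²`,
`h(w,y) = h₁w − (γ₀/(2y))h₂w² + (φ₀/(3y²))h₃w³`, `g(w) = g₁w`, `k(w) = k₁w²`. -/
noncomputable def delta1 (γ₀ φ₀ h₁ h₂ h₃ g₁ k₁ w : ℝ) : ℝ :=
  deriv (fun w' : ℝ =>
      h₁ * w' - γ₀ / (2 * w) * h₂ * w' ^ 2 + φ₀ / (3 * w ^ 2) * h₃ * w' ^ 3) w +
    (γ₀ / w * (g₁ * w) + 2 * (φ₀ / w ^ 2) * (g₁ * w) ^ 2) *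
      deriv (fun w' : ℝ => g₁ * w') w -
    φ₀ / w ^ 2 * (k₁ * w ^ 2) * deriv (fun w' : ℝ => g₁ * w') w -
    φ₀ / w ^ 2 * (g₁ * w) * deriv (fun w' : ℝ => k₁ * w' ^ 2) w

/-- `δ₂(w)` of equation (26) under the ansatz (27)-(28):
`(∂²h/∂w²)(w,y)|_{y=w} + (γ(w)g(w) + 2φ(w)g(w)²)g''(w) − φ(w)k(w)g''(w) − φ(w)g(w)k''(w)`. -/
noncomputable def delta2 (γ₀ φ₀ h₁ h₂ h₃ g₁ k₁ w : ℝ) : ℝ :=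
  deriv (deriv (fun w' : ℝ =>
      h₁ * w' - γ₀ / (2 * w) * h₂ * w' ^ 2 + φ₀ / (3 * w ^ 2) * h₃ * w' ^ 3)) w +
    (γ₀ / w * (g₁ * w) + 2 * (φ₀ / w ^ 2) * (g₁ * w) ^ 2) *
      deriv (deriv (fun w' : ℝ => g₁ * w')) w -
    φ₀ / w ^ 2 * (k₁ * w ^ 2) * deriv (deriv (fun w' : ℝ => g₁ * w')) w -
    φ₀ / w ^ 2 * (g₁ * w) * deriv (deriv (fun w' : ℝ => k₁ * w' ^ 2)) w

theorem hasDerivAt_cubic (a b c x : ℝ) :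
    HasDerivAt (fun x => a * x - b * x ^ 2 + c * x ^ 3) (a - 2 * b * x + 3 * c * x ^ 2) x :=
  ((((hasDerivAt_id' x).const_mul a).sub ((hasDerivAt_pow 2 x).const_mul b)).add
    ((hasDerivAt_pow 3 x).const_mul c)).congr_deriv (by norm_num; ring)

theorem hasDerivAt_quadratic (a b c x : ℝ) :
    HasDerivAt (fun x => a - b * x + c * x ^ 2) (2 * c * x - b) x :=
  ((((hasDerivAt_id' x).const_mul b).const_sub a).add
    ((hasDerivAt_pow 2 x).const_mul c)).congr_deriv (by norm_num; ring)

theorem deriv_deriv_cubic (a b c : ℝ) :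
    deriv (deriv (fun x => a * x - b * x ^ 2 + c * x ^ 3)) = fun x => 6 * c * x - 2 * b := by
  funext x
  rw [funext fun x => (hasDerivAt_cubic a b c x).deriv]
  convert (hasDerivAt_quadratic a (2 * b) (3 * c) x).deriv using 1
  ring

section Delta

variable (γ₀ φ₀ h₁ h₂ h₃ g₁ k₁ : ℝ) {w : ℝ}

theorem delta1_eq (hw : w ≠ 0) :
    delta1 γ₀ φ₀ h₁ h₂ h₃ g₁ k₁ w =
      h₁ + γ₀ * (g₁ ^ 2 - h₂) + φ₀ * (h₃ + 2 * g₁ ^ 3 - 3 * g₁ * k₁) := by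
  rw [delta1, (hasDerivAt_cubic _ _ _ w).deriv]
  simp only [deriv_const_mul_id', deriv_const_mul_field', deriv_pow_field]
  field_simp
  ring

theorem delta2_eq (hw : w ≠ 0) :
    delta2 γ₀ φ₀ h₁ h₂ h₃ g₁ k₁ w = -(γ₀ * h₂ + 2 * φ₀ * (g₁ * k₁ - h₃)) / w := by
  rw [delta2, deriv_deriv_cubic]
  simp only [deriv_const_mul_id', deriv_const_mul_field', deriv_pow_field, deriv_const]
  field_simp
  ring

theorem delta1_div_delta2 (hw : w ≠ 0) :
    delta1 γ₀ φ₀ h₁ h₂ h₃ g₁ k₁ w / delta2 γ₀ φ₀ h₁ h₂ h₃ g₁ k₁ w =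
      -(w * ((h₁ + γ₀ * (g₁ ^ 2 - h₂) + φ₀ * (h₃ + 2 * g₁ ^ 3 - 3 * g₁ * k₁)) /
        (γ₀ * h₂ + 2 * φ₀ * (g₁ * k₁ - h₃)))) := by
  rw [delta1_eq _ _ _ _ _ _ _ hw, delta2_eq _ _ _ _ _ _ _ hw]
  field_simp

end Delta

theorem equilibrium_strategy_proportional_to_wealth_general
    (γ₀ φ₀ h₁ h₂ h₃ g₁ k₁ : ℝ)
    (f : ℝ)
    (hf : f = (h₁ + γ₀ * (g₁ ^ 2 - h₂) + φ₀ * (h₃ + 2 * g₁ ^ 3 - 3 * g₁ * k₁)) /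
      (γ₀ * h₂ + 2 * φ₀ * (g₁ * k₁ - h₃))) :
    ∀ w : ℝ, 0 < w →
      delta1 γ₀ φ₀ h₁ h₂ h₃ g₁ k₁ w / delta2 γ₀ φ₀ h₁ h₂ h₃ g₁ k₁ w = -(w * f) ∧
      ∀ (M : ℕ) (ξ : ℝ), 0 < ξ →
        ∀ (S : Matrix (Fin M) (Fin M) ℝ), IsUnit S →
          ∀ β : Fin M → ℝ,
            (-(1 / (ξ + 1)) *
                (delta1 γ₀ φ₀ h₁ h₂ h₃ g₁ k₁ w / delta2 γ₀ φ₀ h₁ h₂ h₃ g₁ k₁ w)) •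
              (S⁻¹).mulVec β =
            (w / (ξ + 1) * f) • (S⁻¹).mulVec β := by
  intro w hw
  have hratio : delta1 γ₀ φ₀ h₁ h₂ h₃ g₁ k₁ w / delta2 γ₀ φ₀ h₁ h₂ h₃ g₁ k₁ w = -(w * f) :=
    hf ▸ delta1_div_delta2 γ₀ φ₀ h₁ h₂ h₃ g₁ k₁ hw.ne'
  refine ⟨hratio, fun M ξ _ S _ β => ?_⟩
  rw [hratio]
  congr 1
  ring

/-- Derivation of the equilibrium strategy (29)/(36) and Remark 4(ii):
if `δ₃ = γ₀h₂ + 2φ₀(g₁k₁ − h₃) ≠ 0` and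
`f = (h₁ + γ₀(g₁² − h₂) + φ₀(h₃ + 2g₁³ − 3g₁k₁))/δ₃`, then for every `w > 0`
one has `δ₁(w)/δ₂(w) = −w f`, and hence for any `ξ > 0`, any invertible real
`M×M` matrix `Σ` and any `β ∈ ℝ^M`, the robust equilibrium amount
`u* = −(1/(ξ+1))(δ₁(w)/δ₂(w)) Σ⁻¹β` equals `(w/(ξ+1)) f Σ⁻¹β`, i.e. it is
proportional to the current wealth `w`. -/
theorem equilibrium_strategy_proportional_to_wealth
    (γ₀ φ₀ h₁ h₂ h₃ g₁ k₁ : ℝ) (hγ : 0 < γ₀) (hφ : 0 < φ₀)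
    (hδ₃ : γ₀ * h₂ + 2 * φ₀ * (g₁ * k₁ - h₃) ≠ 0)
    (f : ℝ)
    (hf : f = (h₁ + γ₀ * (g₁ ^ 2 - h₂) + φ₀ * (h₃ + 2 * g₁ ^ 3 - 3 * g₁ * k₁)) /
      (γ₀ * h₂ + 2 * φ₀ * (g₁ * k₁ - h₃))) :
    ∀ w : ℝ, 0 < w →
      delta1 γ₀ φ₀ h₁ h₂ h₃ g₁ k₁ w / delta2 γ₀ φ₀ h₁ h₂ h₃ g₁ k₁ w = -(w * f) ∧
      ∀ (M : ℕ) (ξ : ℝ), 0 < ξ →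
        ∀ (S : Matrix (Fin M) (Fin M) ℝ), IsUnit S →
          ∀ β : Fin M → ℝ,
            (-(1 / (ξ + 1)) *
                (delta1 γ₀ φ₀ h₁ h₂ h₃ g₁ k₁ w / delta2 γ₀ φ₀ h₁ h₂ h₃ g₁ k₁ w)) •
              (S⁻¹).mulVec β =
            (w / (ξ + 1) * f) • (S⁻¹).mulVec β :=
  equilibrium_strategy_proportional_to_wealth_general γ₀ φ₀ h₁ h₂ h₃ g₁ k₁ f hf
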